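/- Let Ω ⊆ ℝ^d be a bounded open set equipped with a Gauss–Green partition Ω_1, …, Ω_N with boundary measures σ_i and outward unit normals n_i. Let L : ℝ^d × ℝ × ℝ^d → ℝ be twice continuously differentiable, let u : Ω → ℝ be continuous with u restricted to each Ω_i extending to a C² function on cl(Ω_i) (a broken extremal), and let ξ ∈ C¹(cl(Ω); ℝ^d) and φ ∈ C¹(cl(Ω)). Assume: (i) u satisfies the Euler–Lagrange equation −div(L_p(·,u,∇u)) + L_u(·,u,∇u) = 0 at every point of each Ω_i; and (ii) (piecewise variational symmetry) the infinitesimal invariance identity ∇Q · L_p(·,u,∇u) + Q L_u(·,u,∇u) + div(L(·,u,∇u) ξ) = 0, with Q := φ − ξ·∇u, holds at every point of each Ω_i. Then Σ_{i=1}^N [ ∫_{∂Ω_i} ( φ L_p(·,u,∇u) · n_i + L(·,u,∇u) ξ · n_i ) dσ_i − ∫_{Ω_i} ( L_p(·,u,∇u) · ∇(ξ·∇u) + (ξ·∇u) L_u(·,u,∇u) ) dx ] = 0. -/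

import Mathlib

open MeasureTheory RealInnerProductSpace
open scoped BigOperators

noncomputable section

/-- `ℝ^d` as a Euclidean (inner product) space. -/
abbrev Euc (d : ℕ) := EuclideanSpace ℝ (Fin d)

/-- Divergence of a vector field on `ℝ^d`. -/
noncomputable def pdiv {d : ℕ} (F : Euc d → Euc d) (x : Euc d) : ℝ :=
  ∑ i, fderiv ℝ F x (EuclideanSpace.single i 1) i

/-- `x ↦ L(x, u(x), ∇u(x))`, the Lagrangian evaluated along `u`. -/
noncomputable def lagAlong {d : ℕ} (L : Euc d → ℝ → Euc d → ℝ) (u : Euc d → ℝ)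
    (x : Euc d) : ℝ :=
  L x (u x) (gradient u x)

/-- `L_u(x, u(x), ∇u(x))`, the partial derivative of `L` in its second argument
evaluated along `u`. -/
noncomputable def lagU {d : ℕ} (L : Euc d → ℝ → Euc d → ℝ) (u : Euc d → ℝ)
    (x : Euc d) : ℝ :=
  deriv (fun s => L x s (gradient u x)) (u x)

/-- `L_p(x, u(x), ∇u(x))`, the gradient of `L` in its third argument
evaluated along `u`. -/
noncomputable def lagP {d : ℕ} (L : Euc d → ℝ → Euc d → ℝ) (u : Euc d → ℝ)
    (x : Euc d) : Euc d :=
  gradient (fun p => L x (u x) p) (gradient u x)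

/-- A Gauss–Green partition of a bounded open set `Ω ⊆ ℝ^d`: finitely many pairwise
disjoint open pieces whose closures cover `cl(Ω)`, each equipped with a finite Borel
boundary measure `σ i` supported on `∂(piece i)` and an outward unit normal field,
such that the Gauss–Green (divergence) theorem holds on each piece for `C¹` vector
fields. -/
structure GGPartition (d : ℕ) (Ω : Set (Euc d)) (N : ℕ) where
  piece : Fin N → Set (Euc d)
  isOpen_piece : ∀ i, IsOpen (piece i)
  disjoint_piece : ∀ i j, i ≠ j → Disjoint (piece i) (piece j)
  cover : (⋃ i, closure (piece i)) = closure Ω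
  σ : Fin N → Measure (Euc d)
  σ_finite : ∀ i, IsFiniteMeasure (σ i)
  σ_support : ∀ i, σ i ((frontier (piece i))ᶜ) = 0
  normal : Fin N → Euc d → Euc d
  normal_meas : ∀ i, Measurable (normal i)
  normal_bdd : ∀ i x, ‖normal i x‖ ≤ 1
  normal_unit : ∀ i, ∀ x ∈ frontier (piece i), ‖normal i x‖ = 1
  gauss_green : ∀ i (F : Euc d → Euc d), ContDiff ℝ 1 F →
    ∫ x in piece i, pdiv F x = ∫ x, ⟪F x, normal i x⟫ ∂(σ i)

/-! On each piece the Euler–Lagrange equation `div L_p = L_u` turns the symmetry condition into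
`div (φ L_p + L ξ) = L_p · ∇(ξ · ∇u) + (ξ · ∇u) L_u`, so the Gauss–Green formula for the Noether
current `φ L_p + L ξ` makes every summand vanish. -/

section Gradient

variable {F : Type*} [NormedAddCommGroup F] [InnerProductSpace ℝ F] [CompleteSpace F]

theorem gradient_fun_sub {f g : F → ℝ} {x : F} (hf : DifferentiableAt ℝ f x)
    (hg : DifferentiableAt ℝ g x) :
    gradient (fun y => f y - g y) x = gradient f x - gradient g x := by
  simp only [gradient, fderiv_fun_sub hf hg, map_sub]

theorem ContDiff.gradient_right {f : F → ℝ} {m n : WithTop ℕ∞} (hf : ContDiff ℝ n f)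
    (hmn : m + 1 ≤ n) : ContDiff ℝ m (gradient f) :=
  (InnerProductSpace.toDual ℝ F).symm.contDiff.comp (hf.fderiv_right hmn)

theorem ContDiff.gradient_snd {E : Type*} [NormedAddCommGroup E] [NormedSpace ℝ E]
    {G : E × F → ℝ} {m n : WithTop ℕ∞} (hG : ContDiff ℝ n G) (hmn : m + 1 ≤ n) :
    ContDiff ℝ m (fun q : E × F => gradient (fun p => G (q.1, p)) q.2) := by
  have hn : n ≠ 0 := fun h => by simp [h] at hmn
  have hfderiv : ∀ q : E × F,
      fderiv ℝ (fun p => G (q.1, p)) q.2 = fderiv ℝ G q ∘L ContinuousLinearMap.inr ℝ E F :=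
    fun q => ((hG.differentiable hn) q).hasFDerivAt.comp q.2
      (hasFDerivAt_prodMk_right q.1 q.2) |>.fderiv
  simp only [gradient, hfderiv]
  exact (InnerProductSpace.toDual ℝ F).symm.contDiff.comp
    (((ContinuousLinearMap.compL ℝ F (E × F) ℝ).flip (ContinuousLinearMap.inr ℝ E F)).contDiff.comp
      (hG.fderiv_right hmn))

end Gradient

section Divergence

variable {d : ℕ} {x : Euc d}

theorem pdiv_add {F G : Euc d → Euc d} (hF : DifferentiableAt ℝ F x)
    (hG : DifferentiableAt ℝ G x) :
    pdiv (fun y => F y + G y) x = pdiv F x + pdiv G x := by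
  simp only [pdiv, fderiv_fun_add hF hG, add_apply, PiLp.add_apply,
    Finset.sum_add_distrib]

theorem pdiv_smul {c : Euc d → ℝ} {V : Euc d → Euc d} (hc : DifferentiableAt ℝ c x)
    (hV : DifferentiableAt ℝ V x) :
    pdiv (fun y => c y • V y) x = ⟪gradient c x, V x⟫ + c x * pdiv V x := by
  have hgrad : ∀ i, fderiv ℝ c x (EuclideanSpace.single i 1) = gradient c x i := fun i => by
    rw [← inner_gradient_left, EuclideanSpace.inner_single_right]; simp
  rw [real_inner_comm]
  simp only [pdiv, fderiv_fun_smul hc hV, add_apply,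
    smul_apply, ContinuousLinearMap.smulRight_apply, PiLp.add_apply,
    PiLp.smul_apply, smul_eq_mul, Finset.sum_add_distrib, Finset.mul_sum, hgrad,
    PiLp.inner_apply, RCLike.inner_apply, conj_trivial]
  exact add_comm _ _

end Divergence

section Lagrangian

variable {d : ℕ} {L : Euc d → ℝ → Euc d → ℝ} {v : Euc d → ℝ}

theorem contDiff_lagP (hL : ContDiff ℝ 2 (fun q : Euc d × ℝ × Euc d => L q.1 q.2.1 q.2.2))
    (hv : ContDiff ℝ 2 v) : ContDiff ℝ 1 (lagP L v) := by
  have hL' : ContDiff ℝ 2 (fun q : (Euc d × ℝ) × Euc d => L q.1.1 q.1.2 q.2) :=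
    hL.comp (contDiff_fst.fst.prodMk (contDiff_fst.snd.prodMk contDiff_snd))
  exact (hL'.gradient_snd (by norm_num)).comp
    ((contDiff_id.prodMk (hv.of_le one_le_two)).prodMk (hv.gradient_right (by norm_num)))

theorem contDiff_lagAlong (hL : ContDiff ℝ 2 (fun q : Euc d × ℝ × Euc d => L q.1 q.2.1 q.2.2))
    (hv : ContDiff ℝ 2 v) : ContDiff ℝ 1 (lagAlong L v) :=
  (hL.of_le one_le_two).comp
    (contDiff_id.prodMk ((hv.of_le one_le_two).prodMk (hv.gradient_right (by norm_num))))

end Lagrangian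

section Noether

variable {d : ℕ} {L : Euc d → ℝ → Euc d → ℝ} {v : Euc d → ℝ} {ξ : Euc d → Euc d}
  {φ : Euc d → ℝ}

def noetherCurrent (L : Euc d → ℝ → Euc d → ℝ) (v : Euc d → ℝ) (ξ : Euc d → Euc d)
    (φ : Euc d → ℝ) (x : Euc d) : Euc d :=
  φ x • lagP L v x + lagAlong L v x • ξ x

theorem pdiv_noetherCurrent {x : Euc d} (hφ : DifferentiableAt ℝ φ x)
    (hξ : DifferentiableAt ℝ ξ x) (hv : DifferentiableAt ℝ (gradient v) x)
    (hP : DifferentiableAt ℝ (lagP L v) x) (hΛ : DifferentiableAt ℝ (lagAlong L v) x)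
    (hEL : -(pdiv (lagP L v) x) + lagU L v x = 0)
    (hinv : ⟪gradient (fun y => φ y - ⟪ξ y, gradient v y⟫) x, lagP L v x⟫
        + (φ x - ⟪ξ x, gradient v x⟫) * lagU L v x
        + pdiv (fun y => lagAlong L v y • ξ y) x = 0) :
    pdiv (noetherCurrent L v ξ φ) x
      = ⟪lagP L v x, gradient (fun y => ⟪ξ y, gradient v y⟫) x⟫
        + ⟪ξ x, gradient v x⟫ * lagU L v x := by
  rw [gradient_fun_sub hφ (hξ.inner ℝ hv), inner_sub_left] at hinv
  unfold noetherCurrent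
  rw [pdiv_add (hφ.fun_smul hP) (hΛ.fun_smul hξ), pdiv_smul hφ hP,
    real_inner_comm _ (lagP L v x)]
  linear_combination hinv - φ x * hEL

theorem GGPartition.integral_flux_noetherCurrent {Ω : Set (Euc d)} {N : ℕ}
    (T : GGPartition d Ω N) (i : Fin N)
    (hL : ContDiff ℝ 2 (fun q : Euc d × ℝ × Euc d => L q.1 q.2.1 q.2.2))
    (hv : ContDiff ℝ 2 v) (hξ : ContDiff ℝ 1 ξ) (hφ : ContDiff ℝ 1 φ)
    (hEL : ∀ x ∈ T.piece i, -(pdiv (lagP L v) x) + lagU L v x = 0)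
    (hinv : ∀ x ∈ T.piece i,
      ⟪gradient (fun y => φ y - ⟪ξ y, gradient v y⟫) x, lagP L v x⟫
        + (φ x - ⟪ξ x, gradient v x⟫) * lagU L v x
        + pdiv (fun y => lagAlong L v y • ξ y) x = 0) :
    ∫ x, (φ x * ⟪lagP L v x, T.normal i x⟫ + lagAlong L v x * ⟪ξ x, T.normal i x⟫) ∂(T.σ i)
      = ∫ x in T.piece i,
          (⟪lagP L v x, gradient (fun y => ⟪ξ y, gradient v y⟫) x⟫
            + ⟪ξ x, gradient v x⟫ * lagU L v x) := by
  have hP := contDiff_lagP hL hv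
  have hΛ := contDiff_lagAlong hL hv
  have hgrad : ContDiff ℝ 1 (gradient v) := hv.gradient_right (by norm_num)
  calc _ = ∫ x, ⟪noetherCurrent L v ξ φ x, T.normal i x⟫ ∂(T.σ i) := by
        simp only [noetherCurrent, inner_add_left, real_inner_smul_left]
    _ = ∫ x in T.piece i, pdiv (noetherCurrent L v ξ φ) x :=
        (T.gauss_green i _ ((hφ.smul hP).add (hΛ.smul hξ))).symm
    _ = _ := setIntegral_congr_fun (T.isOpen_piece i).measurableSet fun x hx =>
        pdiv_noetherCurrent (hφ.differentiable one_ne_zero x) (hξ.differentiable one_ne_zero x)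
          (hgrad.differentiable one_ne_zero x) (hP.differentiable one_ne_zero x)
          (hΛ.differentiable one_ne_zero x) (hEL x hx) (hinv x hx)

end Noether

theorem noether_broken_extremals_general {d N : ℕ} (Ω : Set (Euc d))
    (T : GGPartition d Ω N)
    (L : Euc d → ℝ → Euc d → ℝ)
    (hL : ContDiff ℝ 2 (fun q : Euc d × ℝ × Euc d => L q.1 q.2.1 q.2.2))
    (uext : Fin N → Euc d → ℝ) (huext : ∀ i, ContDiff ℝ 2 (uext i))
    (ξ : Euc d → Euc d) (hξ : ContDiff ℝ 1 ξ)
    (φ : Euc d → ℝ) (hφ : ContDiff ℝ 1 φ)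
    (hEL : ∀ i, ∀ x ∈ T.piece i,
      -(pdiv (lagP L (uext i)) x) + lagU L (uext i) x = 0)
    (hinv : ∀ i, ∀ x ∈ T.piece i,
      ⟪gradient (fun y => φ y - ⟪ξ y, gradient (uext i) y⟫) x, lagP L (uext i) x⟫
        + (φ x - ⟪ξ x, gradient (uext i) x⟫) * lagU L (uext i) x
        + pdiv (fun y => lagAlong L (uext i) y • ξ y) x = 0) :
    ∑ i, ((∫ x, (φ x * ⟪lagP L (uext i) x, T.normal i x⟫
            + lagAlong L (uext i) x * ⟪ξ x, T.normal i x⟫) ∂(T.σ i))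
      - ∫ x in T.piece i,
          (⟪lagP L (uext i) x, gradient (fun y => ⟪ξ y, gradient (uext i) y⟫) x⟫
            + ⟪ξ x, gradient (uext i) x⟫ * lagU L (uext i) x)) = 0 :=
  Finset.sum_eq_zero fun i _ => sub_eq_zero.mpr <|
    T.integral_flux_noetherCurrent i hL (huext i) hξ hφ (hEL i) (hinv i)

/-- conserved quantities for broken extremals: if `u` is a broken
extremal (continuous, piecewise `C²` over a Gauss–Green partition of `Ω`) satisfying
the Euler–Lagrange equation on each piece, and the problem has a piecewise variational
symmetry with infinitesimals `ξ, φ`, then the sum of per-piece boundary terms and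
bulk transport terms vanishes. -/
theorem noether_broken_extremals {d N : ℕ} (Ω : Set (Euc d))
    (hΩo : IsOpen Ω) (hΩb : Bornology.IsBounded Ω)
    (T : GGPartition d Ω N)
    (L : Euc d → ℝ → Euc d → ℝ)
    (hL : ContDiff ℝ 2 (fun q : Euc d × ℝ × Euc d => L q.1 q.2.1 q.2.2))
    (u : Euc d → ℝ) (hu : ContinuousOn u Ω)
    (uext : Fin N → Euc d → ℝ) (huext : ∀ i, ContDiff ℝ 2 (uext i))
    (hagree : ∀ i, ∀ x ∈ T.piece i, u x = uext i x)
    (ξ : Euc d → Euc d) (hξ : ContDiff ℝ 1 ξ)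
    (φ : Euc d → ℝ) (hφ : ContDiff ℝ 1 φ)
    (hEL : ∀ i, ∀ x ∈ T.piece i,
      -(pdiv (lagP L (uext i)) x) + lagU L (uext i) x = 0)
    (hinv : ∀ i, ∀ x ∈ T.piece i,
      ⟪gradient (fun y => φ y - ⟪ξ y, gradient (uext i) y⟫) x, lagP L (uext i) x⟫
        + (φ x - ⟪ξ x, gradient (uext i) x⟫) * lagU L (uext i) x
        + pdiv (fun y => lagAlong L (uext i) y • ξ y) x = 0) :
    ∑ i, ((∫ x, (φ x * ⟪lagP L (uext i) x, T.normal i x⟫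
            + lagAlong L (uext i) x * ⟪ξ x, T.normal i x⟫) ∂(T.σ i))
      - ∫ x in T.piece i,
          (⟪lagP L (uext i) x, gradient (fun y => ⟪ξ y, gradient (uext i) y⟫) x⟫
            + ⟪ξ x, gradient (uext i) x⟫ * lagU L (uext i) x)) = 0 :=
  noether_broken_extremals_general Ω T L hL uext huext ξ hξ φ hφ hEL hinv
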